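/- arXiv:math/0406534 — 7 statements merged into one kernel-verified Lean document; each statement's English description precedes it below -/
import Mathlib

section
/- Let η : Ω → ℝ be measurable and suppose P(|η| > x) ≥ exp(−W(log x)) for all x ≥ e². Then there exist p₀ ≥ 2 and a constant C₀ ∈ (0,∞) such that |η|_p ≥ C₀·ψ(p) for all p ≥ p₀. -/
open MeasureTheory Filter Set
open scoped ENNReal Topology

/-- The restricted Young–Fenchel transform `W*(p) = sup_{z ≥ 2} (p·z − W(z))`. -/
noncomputable def Wstar (W : ℝ → ℝ) (p : ℝ) : ℝ :=
  sSup {y | ∃ z, 2 ≤ z ∧ y = p * z - W z}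

/-- `ψ(p) = exp(W*(p)/p)`. -/
noncomputable def psiW (W : ℝ → ℝ) (p : ℝ) : ℝ :=
  Real.exp (Wstar W p / p)

/-- `W` is continuous, convex, strictly increasing on `[2,∞)` and its
left derivative tends to `+∞`. -/
structure WClass (W : ℝ → ℝ) : Prop where
  cont : ContinuousOn W (Set.Ici 2)
  convex : ConvexOn ℝ (Set.Ici 2) W
  strictMono : StrictMonoOn W (Set.Ici 2)
  leftDeriv_tendsto :
    Filter.Tendsto (fun p => derivWithin W (Set.Iio p) p) Filter.atTop Filter.atTop

/-!
By Chebyshev's inequality, `E|η|^p ≥ e^{pz} P(|η| > e^z) ≥ exp(pz − W(z))` for every `z ≥ 2`.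
Taking the supremum over `z` gives `|η|_p^p ≥ exp W*(p) = ψ(p)^p`, so `C₀ = 1` and `p₀ = 2` work.
-/

namespace ENNReal

-- No boundedness assumption is needed: if `S` is unbounded above (so `sSup S = 0`), then `A = ⊤`.
lemma ofReal_exp_sSup_le {S : Set ℝ} {A : ℝ≥0∞} (hS : S.Nonempty)
    (hA : ∀ y ∈ S, ENNReal.ofReal (Real.exp y) ≤ A) :
    ENNReal.ofReal (Real.exp (sSup S)) ≤ A := by
  rcases eq_or_ne A ⊤ with rfl | hA_top
  · exact le_top
  have hexp_le : ∀ y ∈ S, Real.exp y ≤ A.toReal := fun y hy =>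
    (ofReal_le_iff_le_toReal hA_top).mp (hA y hy)
  obtain ⟨y₀, hy₀⟩ := hS
  have hA_pos : 0 < A.toReal := (Real.exp_pos y₀).trans_le (hexp_le y₀ hy₀)
  have hsSup_le_log : sSup S ≤ Real.log A.toReal :=
    csSup_le ⟨y₀, hy₀⟩ fun y hy => (Real.le_log_iff_exp_le hA_pos).mpr (hexp_le y hy)
  calc ENNReal.ofReal (Real.exp (sSup S))
      ≤ ENNReal.ofReal (Real.exp (Real.log A.toReal)) :=
        ofReal_le_ofReal (Real.exp_le_exp.mpr hsSup_le_log)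
    _ = A := by rw [Real.exp_log hA_pos, ofReal_toReal hA_top]

lemma ofReal_exp_div_le_of_le_rpow {a p : ℝ} {A : ℝ≥0∞} (hp : 0 < p)
    (h : ENNReal.ofReal (Real.exp a) ≤ A ^ p) :
    ENNReal.ofReal (Real.exp (a / p)) ≤ A := by
  rw [← rpow_inv_le_iff hp] at h
  rwa [ofReal_rpow_of_pos (Real.exp_pos a), ← Real.exp_mul, ← div_eq_mul_inv] at h

end ENNReal

section TailToMoment

variable {Ω : Type*} [MeasurableSpace Ω] {μ : Measure Ω} {η : Ω → ℝ}

lemma ofReal_rpow_mul_meas_lt_abs_le_eLpNorm_rpow (hη : AEStronglyMeasurable η μ)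
    {x p : ℝ} (hx : 0 < x) (hp : 0 < p) :
    ENNReal.ofReal (x ^ p) * μ {ω | x < |η ω|} ≤ eLpNorm η (ENNReal.ofReal p) μ ^ p := by
  have hchebyshev := mul_meas_ge_le_pow_eLpNorm' μ (ENNReal.ofReal_pos.mpr hp).ne'
    ENNReal.ofReal_ne_top hη (ENNReal.ofReal x)
  rw [ENNReal.toReal_ofReal hp.le, ENNReal.ofReal_rpow_of_pos hx] at hchebyshev
  refine le_trans (mul_le_mul_right (measure_mono fun ω (hω : x < |η ω|) => ?_) _) hchebyshev
  rw [Set.mem_ofPred_eq, ← ofReal_norm, Real.norm_eq_abs]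
  exact ENNReal.ofReal_le_ofReal hω.le

lemma ofReal_exp_mul_sub_le_eLpNorm_rpow (hη : AEStronglyMeasurable η μ) {z a p : ℝ}
    (hp : 0 < p) (htail : ENNReal.ofReal (Real.exp (-a)) ≤ μ {ω | Real.exp z < |η ω|}) :
    ENNReal.ofReal (Real.exp (p * z - a)) ≤ eLpNorm η (ENNReal.ofReal p) μ ^ p := by
  have hsplit : Real.exp (p * z - a) = Real.exp z ^ p * Real.exp (-a) := by
    rw [← Real.exp_mul, ← Real.exp_add, mul_comm z p, sub_eq_add_neg]
  calc ENNReal.ofReal (Real.exp (p * z - a))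
      = ENNReal.ofReal (Real.exp z ^ p) * ENNReal.ofReal (Real.exp (-a)) := by
        rw [hsplit, ENNReal.ofReal_mul (by positivity)]
    _ ≤ ENNReal.ofReal (Real.exp z ^ p) * μ {ω | Real.exp z < |η ω|} := by gcongr
    _ ≤ eLpNorm η (ENNReal.ofReal p) μ ^ p :=
        ofReal_rpow_mul_meas_lt_abs_le_eLpNorm_rpow hη (Real.exp_pos z) hp

end TailToMoment

theorem stmt2_general {Ω : Type*} [MeasurableSpace Ω] (μ : Measure Ω)
    (W : ℝ → ℝ)
    (η : Ω → ℝ) (hη : Measurable η)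
    (htail : ∀ x : ℝ, Real.exp 2 ≤ x →
      ENNReal.ofReal (Real.exp (-(W (Real.log x)))) ≤ μ {ω | x < |η ω|}) :
    ∃ p₀ : ℝ, 2 ≤ p₀ ∧ ∃ C₀ : ℝ, 0 < C₀ ∧ ∀ p : ℝ, p₀ ≤ p →
      ENNReal.ofReal (C₀ * psiW W p) ≤ eLpNorm η (ENNReal.ofReal p) μ := by
  refine ⟨2, le_rfl, 1, one_pos, fun p hp => ?_⟩
  have hp_pos : 0 < p := by linarith
  rw [one_mul, psiW, Wstar]
  refine ENNReal.ofReal_exp_div_le_of_le_rpow hp_pos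
    (ENNReal.ofReal_exp_sSup_le ⟨_, 2, le_rfl, rfl⟩ ?_)
  rintro _ ⟨z, hz, rfl⟩
  have htail_z := htail (Real.exp z) (Real.exp_le_exp.mpr hz)
  rw [Real.log_exp] at htail_z
  exact ofReal_exp_mul_sub_le_eLpNorm_rpow hη.aestronglyMeasurable hp_pos htail_z

theorem stmt2 {Ω : Type*} [MeasurableSpace Ω] (μ : Measure Ω) [IsProbabilityMeasure μ]
    (W : ℝ → ℝ) (hW : WClass W)
    (η : Ω → ℝ) (hη : Measurable η)
    (htail : ∀ x : ℝ, Real.exp 2 ≤ x →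
      ENNReal.ofReal (Real.exp (-(W (Real.log x)))) ≤ μ {ω | x < |η ω|}) :
    ∃ p₀ : ℝ, 2 ≤ p₀ ∧ ∃ C₀ : ℝ, 0 < C₀ ∧ ∀ p : ℝ, p₀ ≤ p →
      ENNReal.ofReal (C₀ * psiW W p) ≤ eLpNorm η (ENNReal.ofReal p) μ :=
  stmt2_general μ W η hη htail
end

section
/- Let m > 0, let L : [1,∞) → (0,∞) be a continuous slowly varying function such that u ↦ u^m·L(u) is strictly increasing to +∞, and let ξ, η be random variables for which there exists C₁ > 0 with P(|ξ| > x) ≤ exp(−C₁·x^m·L(x)) and P(|η| > x) ≤ exp(−C₁·x^m·L(x)) for all x ≥ 2. Then there exist constants C > 0 and x₀ ≥ 2 such that P(|ξ·η| > x) ≤ exp(−C·x^{m/2}·L(√x)) for all x ≥ x₀. -/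
open MeasureTheory Filter Set
open scoped ENNReal Topology

theorem stmt8 {Ω : Type*} [MeasurableSpace Ω] (μ : Measure Ω) [IsProbabilityMeasure μ]
    (m : ℝ) (hm : 0 < m)
    (L : ℝ → ℝ) (hLpos : ∀ u : ℝ, 1 ≤ u → 0 < L u) (hLcont : ContinuousOn L (Set.Ici 1))
    (hLslow : ∀ c : ℝ, 0 < c →
      Filter.Tendsto (fun u => L (c * u) / L u) Filter.atTop (𝓝 1))
    (hWmono : StrictMonoOn (fun u => u ^ m * L u) (Set.Ici 1))
    (hWtop : Filter.Tendsto (fun u => u ^ m * L u) Filter.atTop Filter.atTop)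
    (ξ η : Ω → ℝ) (hξ : Measurable ξ) (hη : Measurable η)
    (C₁ : ℝ) (hC₁ : 0 < C₁)
    (htξ : ∀ x : ℝ, 2 ≤ x →
      μ {ω | x < |ξ ω|} ≤ ENNReal.ofReal (Real.exp (-(C₁ * x ^ m * L x))))
    (htη : ∀ x : ℝ, 2 ≤ x →
      μ {ω | x < |η ω|} ≤ ENNReal.ofReal (Real.exp (-(C₁ * x ^ m * L x)))) :
    ∃ C : ℝ, 0 < C ∧ ∃ x₀ : ℝ, 2 ≤ x₀ ∧ ∀ x : ℝ, x₀ ≤ x →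
      μ {ω | x < |ξ ω * η ω|} ≤
        ENNReal.ofReal (Real.exp (-(C * x ^ (m/2) * L (Real.sqrt x)))) := by
  obtain ⟨N, hN⟩ := (hWtop.eventually_ge_atTop (2 * Real.log 2 / C₁)).exists_forall_of_atTop
  set M : ℝ := max N 2 with hM
  refine ⟨C₁ / 2, by positivity, M ^ 2, ?_, ?_⟩
  · have : (2 : ℝ) ≤ M := le_max_right _ _
    nlinarith
  intro x hx
  have hM2 : (2 : ℝ) ≤ M := le_max_right _ _
  have hMpos : (0 : ℝ) < M := by linarith
  have hxpos : (0 : ℝ) < x := lt_of_lt_of_le (by nlinarith) hx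
  set s := Real.sqrt x with hs
  have hsM : M ≤ s := by
    rw [hs, show M = Real.sqrt (M ^ 2) from (Real.sqrt_sq hMpos.le).symm]
    exact Real.sqrt_le_sqrt hx
  have hs2 : (2 : ℝ) ≤ s := le_trans hM2 hsM
  have hsN : N ≤ s := le_trans (le_max_left _ _) hsM
  have hspos : (0 : ℝ) < s := by linarith
  -- set inclusion
  have hsub : {ω | x < |ξ ω * η ω|} ⊆ {ω | s < |ξ ω|} ∪ {ω | s < |η ω|} := by
    intro ω hω
    by_contra hcon
    simp only [Set.mem_union, Set.mem_setOf_eq, not_or, not_lt] at hcon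
    have : |ξ ω * η ω| ≤ s * s := by
      rw [abs_mul]
      exact mul_le_mul hcon.1 hcon.2 (abs_nonneg _) hspos.le
    rw [Real.mul_self_sqrt hxpos.le] at this
    exact absurd hω (by simpa using not_lt.2 this)
  have hT : 2 * Real.log 2 / C₁ ≤ s ^ m * L s := hN s hsN
  have hsm : s ^ m = x ^ (m / 2) := by
    rw [hs, Real.sqrt_eq_rpow, ← Real.rpow_mul hxpos.le, show (1/2) * m = m/2 by ring]
  calc μ {ω | x < |ξ ω * η ω|}
      ≤ μ ({ω | s < |ξ ω|} ∪ {ω | s < |η ω|}) := measure_mono hsub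
    _ ≤ μ {ω | s < |ξ ω|} + μ {ω | s < |η ω|} := measure_union_le _ _
    _ ≤ ENNReal.ofReal (Real.exp (-(C₁ * s ^ m * L s)))
        + ENNReal.ofReal (Real.exp (-(C₁ * s ^ m * L s))) :=
        add_le_add (htξ s hs2) (htη s hs2)
    _ = ENNReal.ofReal (2 * Real.exp (-(C₁ * s ^ m * L s))) := by
        rw [← ENNReal.ofReal_add (Real.exp_nonneg _) (Real.exp_nonneg _)]
        congr 1; ring
    _ ≤ ENNReal.ofReal (Real.exp (-(C₁ / 2 * x ^ (m/2) * L s))) := by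
        apply ENNReal.ofReal_le_ofReal
        have h2 : (2:ℝ) * Real.exp (-(C₁ * s ^ m * L s))
            = Real.exp (Real.log 2 + -(C₁ * s ^ m * L s)) := by
          rw [Real.exp_add, Real.exp_log two_pos]
        rw [h2]
        apply Real.exp_le_exp.2
        rw [← hsm]
        have : Real.log 2 ≤ C₁ / 2 * (s ^ m * L s) := by
          rw [div_le_iff₀ hC₁] at hT
          nlinarith
        nlinarith
end

section
/- Let m > 0, let L : [1,∞) → (0,∞) be a continuous slowly varying function such that u ↦ u^m·L(u) is strictly increasing to +∞, and let ξ, η be independent, identically distributed, symmetrically distributed random variables for which there exist constants 0 < C₁ < C₂ < ∞ with exp(−C₂·x^m·L(x)) ≤ P(|ξ| > x) ≤ exp(−C₁·x^m·L(x)) for all x ≥ 2. Then there exist constants C₃ > 0 and x₀ ≥ 2 such that P(|ξ·η| > x) ≥ exp(−C₃·x^{m/2}·L(√x)) for all x ≥ x₀. -/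
open MeasureTheory Filter Set
open scoped ENNReal Topology

theorem stmt9 {Ω : Type*} [MeasurableSpace Ω] (μ : Measure Ω) [IsProbabilityMeasure μ]
    (m : ℝ) (hm : 0 < m)
    (L : ℝ → ℝ) (hLpos : ∀ u : ℝ, 1 ≤ u → 0 < L u) (hLcont : ContinuousOn L (Set.Ici 1))
    (hLslow : ∀ c : ℝ, 0 < c →
      Filter.Tendsto (fun u => L (c * u) / L u) Filter.atTop (𝓝 1))
    (hWmono : StrictMonoOn (fun u => u ^ m * L u) (Set.Ici 1))
    (hWtop : Filter.Tendsto (fun u => u ^ m * L u) Filter.atTop Filter.atTop)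
    (ξ η : Ω → ℝ) (hξ : Measurable ξ) (hη : Measurable η)
    (hindep : ProbabilityTheory.IndepFun ξ η μ)
    (hid : Measure.map ξ μ = Measure.map η μ)
    (hsym : Measure.map ξ μ = Measure.map (fun ω => -(ξ ω)) μ)
    (C₁ C₂ : ℝ) (hC₁ : 0 < C₁) (hC₁₂ : C₁ < C₂)
    (htail : ∀ x : ℝ, 2 ≤ x →
      ENNReal.ofReal (Real.exp (-(C₂ * x ^ m * L x))) ≤ μ {ω | x < |ξ ω|} ∧
      μ {ω | x < |ξ ω|} ≤ ENNReal.ofReal (Real.exp (-(C₁ * x ^ m * L x)))) :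
    ∃ C₃ : ℝ, 0 < C₃ ∧ ∃ x₀ : ℝ, 2 ≤ x₀ ∧ ∀ x : ℝ, x₀ ≤ x →
      ENNReal.ofReal (Real.exp (-(C₃ * x ^ (m/2) * L (Real.sqrt x)))) ≤
        μ {ω | x < |ξ ω * η ω|} := by
  refine ⟨2 * C₂, by linarith, 4, by norm_num, fun x hx => ?_⟩
  have hx0 : (0:ℝ) ≤ x := by linarith
  set s := Real.sqrt x with hs
  have hs2 : (2:ℝ) ≤ s := by
    have : Real.sqrt 4 ≤ s := Real.sqrt_le_sqrt hx
    rwa [show (4:ℝ) = 2^2 by norm_num, Real.sqrt_sq (by norm_num : (0:ℝ) ≤ 2)] at this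
  have hA : MeasurableSet {y : ℝ | s < |y|} :=
    measurableSet_lt measurable_const measurable_id.abs
  have hsub : ξ ⁻¹' {y | s < |y|} ∩ η ⁻¹' {y | s < |y|} ⊆ {ω | x < |ξ ω * η ω|} := by
    rintro ω ⟨h1, h2⟩
    simp only [mem_preimage, mem_setOf_eq] at *
    rw [abs_mul]
    calc x = s * s := (Real.mul_self_sqrt hx0).symm
    _ < |ξ ω| * |η ω| := mul_lt_mul'' h1 h2 (by linarith) (by linarith)
  have hmul : μ (ξ ⁻¹' {y | s < |y|} ∩ η ⁻¹' {y | s < |y|}) =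
      μ (ξ ⁻¹' {y | s < |y|}) * μ (η ⁻¹' {y | s < |y|}) :=
    hindep.measure_inter_preimage_eq_mul _ _ hA hA
  have hη' : μ (η ⁻¹' {y | s < |y|}) = μ (ξ ⁻¹' {y | s < |y|}) := by
    have := congrArg (fun ν : Measure ℝ => ν {y | s < |y|}) hid
    simpa [Measure.map_apply hξ hA, Measure.map_apply hη hA] using this.symm
  have htail' := (htail s hs2).1
  have hξset : ξ ⁻¹' {y | s < |y|} = {ω | s < |ξ ω|} := rfl
  have hsm : s ^ m = x ^ (m / 2) := by
    rw [hs, Real.sqrt_eq_rpow, ← Real.rpow_mul hx0]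
    ring_nf
  calc ENNReal.ofReal (Real.exp (-(2 * C₂ * x ^ (m/2) * L s)))
      = ENNReal.ofReal (Real.exp (-(C₂ * s ^ m * L s)) * Real.exp (-(C₂ * s ^ m * L s))) := by
        rw [← Real.exp_add]; rw [hsm]; ring_nf
    _ = ENNReal.ofReal (Real.exp (-(C₂ * s ^ m * L s))) *
        ENNReal.ofReal (Real.exp (-(C₂ * s ^ m * L s))) :=
        ENNReal.ofReal_mul (Real.exp_nonneg _)
    _ ≤ μ (ξ ⁻¹' {y | s < |y|}) * μ (η ⁻¹' {y | s < |y|}) := by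
        rw [hη', hξset]; exact mul_le_mul' htail' htail'
    _ = μ (ξ ⁻¹' {y | s < |y|} ∩ η ⁻¹' {y | s < |y|}) := hmul.symm
    _ ≤ μ {ω | x < |ξ ω * η ω|} := measure_mono hsub
end

section
/- Let (Ω₁, 𝓕₁, P₁) and (Ω₂, 𝓕₂, P₂) be probability spaces, let Dom denote the set of measurable f : Ω₁ → ℝ with |f|_p < ∞ for all p ≥ 2, and let Q be a map sending each f ∈ Dom to a measurable function Q[f] : Ω₂ → ℝ. Suppose there are constants a ≥ 0, b, d, C, C₁ ∈ (0,∞) and p₀ ≥ 2 such that for every f ∈ Dom and every p ≥ p₀: |Q[f]|_p ≤ C₁·p^a·(|f|_{C·p^b})^d. Then for every m > 0, setting n = m/(a·m + b·d), there exists a constant C₂ ∈ (0,∞) such that for every f ∈ Dom with sup_{p ≥ 2} |f|_p/p^{1/m} < ∞: sup_{p ≥ 2} |Q[f]|_p/p^{1/n} ≤ C₂·(sup_{p ≥ 2} |f|_p/p^{1/m})^d. -/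
open MeasureTheory Filter Set
open scoped ENNReal Topology

theorem stmt10 {Ω₁ Ω₂ : Type*} [MeasurableSpace Ω₁] [MeasurableSpace Ω₂]
    (μ₁ : Measure Ω₁) (μ₂ : Measure Ω₂) [IsProbabilityMeasure μ₁] [IsProbabilityMeasure μ₂]
    (Q : (Ω₁ → ℝ) → (Ω₂ → ℝ))
    (a b d C C₁ p₀ : ℝ) (ha : 0 ≤ a) (hb : 0 < b) (hd : 0 < d) (hC : 0 < C)
    (hC₁ : 0 < C₁) (hp₀ : 2 ≤ p₀)
    (hQmeas : ∀ f : Ω₁ → ℝ, Measurable f →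
      (∀ p : ℝ, 2 ≤ p → eLpNorm f (ENNReal.ofReal p) μ₁ < ⊤) → Measurable (Q f))
    (hQ : ∀ f : Ω₁ → ℝ, Measurable f →
      (∀ p : ℝ, 2 ≤ p → eLpNorm f (ENNReal.ofReal p) μ₁ < ⊤) →
      ∀ p : ℝ, p₀ ≤ p →
        eLpNorm (Q f) (ENNReal.ofReal p) μ₂ ≤
          ENNReal.ofReal (C₁ * p ^ a) * (eLpNorm f (ENNReal.ofReal (C * p ^ b)) μ₁) ^ d) :
    ∀ m : ℝ, 0 < m → ∃ C₂ : ℝ, 0 < C₂ ∧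
      ∀ f : Ω₁ → ℝ, Measurable f →
        (∀ p : ℝ, 2 ≤ p → eLpNorm f (ENNReal.ofReal p) μ₁ < ⊤) →
        (⨆ p : {p : ℝ // 2 ≤ p},
            eLpNorm f (ENNReal.ofReal (p : ℝ)) μ₁ / ENNReal.ofReal ((p : ℝ) ^ (1/m))) < ⊤ →
        (⨆ p : {p : ℝ // 2 ≤ p},
            eLpNorm (Q f) (ENNReal.ofReal (p : ℝ)) μ₂ /
              ENNReal.ofReal ((p : ℝ) ^ (1/(m/(a*m + b*d))))) ≤
          ENNReal.ofReal C₂ *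
            (⨆ p : {p : ℝ // 2 ≤ p},
              eLpNorm f (ENNReal.ofReal (p : ℝ)) μ₁ / ENNReal.ofReal ((p : ℝ) ^ (1/m))) ^ d := by
  intro m hm
  have hmne : m ≠ 0 := ne_of_gt hm
  set N : ℝ := (a * m + b * d) / m with hNdef
  have hamb : 0 < a * m + b * d := by positivity
  have hNpos : 0 < N := by positivity
  have hKeyN : 1 / (m / (a * m + b * d)) = N := one_div_div _ _
  set K : ℝ := C₁ * (max C 2) ^ (d / m) with hKdef
  have hmaxC : (0:ℝ) < max C 2 := lt_of_lt_of_le two_pos (le_max_right C 2)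
  have hKpos : 0 < K := by positivity
  have h2N : (0:ℝ) < (2:ℝ) ^ N := Real.rpow_pos_of_pos two_pos N
  have hp₀N : (2:ℝ) ^ N ≤ p₀ ^ N := Real.rpow_le_rpow (by norm_num) hp₀ hNpos.le
  refine ⟨K * p₀ ^ N / 2 ^ N, by positivity, ?_⟩
  intro f hf hfLp hMfin
  set M := ⨆ p : {p : ℝ // 2 ≤ p},
      eLpNorm f (ENNReal.ofReal (p : ℝ)) μ₁ / ENNReal.ofReal ((p : ℝ) ^ (1/m)) with hMdef
  -- bound on f's norms
  have hfle : ∀ q : ℝ, 2 ≤ q →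
      eLpNorm f (ENNReal.ofReal q) μ₁ ≤ M * ENNReal.ofReal (q ^ (1/m)) := by
    intro q hq
    have hq0 : (0:ℝ) < q ^ (1/m) := Real.rpow_pos_of_pos (by linarith) _
    have h1 : eLpNorm f (ENNReal.ofReal q) μ₁ / ENNReal.ofReal (q ^ (1/m)) ≤ M :=
      le_iSup (fun p : {p : ℝ // 2 ≤ p} =>
        eLpNorm f (ENNReal.ofReal (p : ℝ)) μ₁ / ENNReal.ofReal ((p : ℝ) ^ (1/m))) ⟨q, hq⟩
    rw [ENNReal.div_le_iff_le_mul (Or.inl (ENNReal.ofReal_pos.mpr hq0).ne')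
      (Or.inl ENNReal.ofReal_ne_top)] at h1
    exact h1
  -- main bound for p ≥ p₀
  have hQbound : ∀ p : ℝ, p₀ ≤ p →
      eLpNorm (Q f) (ENNReal.ofReal p) μ₂ ≤ ENNReal.ofReal (K * p ^ N) * M ^ d := by
    intro p hp
    have hp2 : (2:ℝ) ≤ p := le_trans hp₀ hp
    have hppos : (0:ℝ) < p := by linarith
    have hpb1 : (1:ℝ) ≤ p ^ b := Real.one_le_rpow (by linarith) hb.le
    have hpbpos : (0:ℝ) < p ^ b := by linarith
    set q' : ℝ := max C 2 * p ^ b with hq'def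
    have hq'2 : (2:ℝ) ≤ q' := by
      have h2 : (2:ℝ) ≤ max C 2 := le_max_right C 2
      nlinarith
    have hq'le : C * p ^ b ≤ q' := by
      have := le_max_left C 2
      nlinarith
    have hmono : eLpNorm f (ENNReal.ofReal (C * p ^ b)) μ₁ ≤ eLpNorm f (ENNReal.ofReal q') μ₁ :=
      eLpNorm_le_eLpNorm_of_exponent_le (ENNReal.ofReal_le_ofReal hq'le)
        hf.aestronglyMeasurable
    have step1 := hQ f hf hfLp p hp
    have step2 : (eLpNorm f (ENNReal.ofReal (C * p ^ b)) μ₁) ^ d ≤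
        (M * ENNReal.ofReal (q' ^ (1/m))) ^ d :=
      ENNReal.rpow_le_rpow (le_trans hmono (hfle q' hq'2)) hd.le
    have hq'pos : (0:ℝ) < q' := by linarith
    have step3 : (M * ENNReal.ofReal (q' ^ (1/m))) ^ d =
        M ^ d * ENNReal.ofReal (q' ^ (d/m)) := by
      rw [ENNReal.mul_rpow_of_nonneg _ _ hd.le,
        ENNReal.ofReal_rpow_of_nonneg (Real.rpow_nonneg hq'pos.le _) hd.le,
        ← Real.rpow_mul hq'pos.le]
      congr 2
      ring
    have calc1 : eLpNorm (Q f) (ENNReal.ofReal p) μ₂ ≤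
        ENNReal.ofReal (C₁ * p ^ a) * (M ^ d * ENNReal.ofReal (q' ^ (d/m))) := by
      calc eLpNorm (Q f) (ENNReal.ofReal p) μ₂
          ≤ ENNReal.ofReal (C₁ * p ^ a) * (eLpNorm f (ENNReal.ofReal (C * p ^ b)) μ₁) ^ d :=
            step1
        _ ≤ ENNReal.ofReal (C₁ * p ^ a) * (M * ENNReal.ofReal (q' ^ (1/m))) ^ d :=
            mul_le_mul_right step2 _
        _ = ENNReal.ofReal (C₁ * p ^ a) * (M ^ d * ENNReal.ofReal (q' ^ (d/m))) := by
            rw [step3]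
    have harith : C₁ * p ^ a * (q' ^ (d/m)) = K * p ^ N := by
      have h1 : q' ^ (d/m) = (max C 2) ^ (d/m) * (p ^ b) ^ (d/m) :=
        Real.mul_rpow hmaxC.le hpbpos.le
      have h2 : (p ^ b) ^ (d/m) = p ^ (b * (d/m)) :=
        (Real.rpow_mul hppos.le b (d/m)).symm
      have h3 : p ^ a * p ^ (b * (d/m)) = p ^ (a + b * (d/m)) :=
        (Real.rpow_add hppos a _).symm
      have h4 : a + b * (d/m) = N := by
        rw [hNdef]; field_simp
      rw [h1, h2, hKdef]
      calc C₁ * p ^ a * ((max C 2) ^ (d/m) * p ^ (b * (d/m)))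
          = C₁ * (max C 2) ^ (d/m) * (p ^ a * p ^ (b * (d/m))) := by ring
        _ = C₁ * (max C 2) ^ (d/m) * p ^ (a + b * (d/m)) := by rw [h3]
        _ = C₁ * (max C 2) ^ (d/m) * p ^ N := by rw [h4]
    calc eLpNorm (Q f) (ENNReal.ofReal p) μ₂
        ≤ ENNReal.ofReal (C₁ * p ^ a) * (M ^ d * ENNReal.ofReal (q' ^ (d/m))) := calc1
      _ = ENNReal.ofReal (C₁ * p ^ a) * ENNReal.ofReal (q' ^ (d/m)) * M ^ d := by ring
      _ = ENNReal.ofReal (C₁ * p ^ a * (q' ^ (d/m))) * M ^ d := by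
          rw [← ENNReal.ofReal_mul (by positivity)]
      _ = ENNReal.ofReal (K * p ^ N) * M ^ d := by rw [harith]
  -- conclude
  rw [show (1 / (m / (a * m + b * d))) = N from hKeyN]
  refine iSup_le ?_
  rintro ⟨p, hp⟩
  simp only
  have hppos : (0:ℝ) < p := by linarith
  have hpN : (0:ℝ) < p ^ N := Real.rpow_pos_of_pos hppos N
  rw [ENNReal.div_le_iff_le_mul (Or.inl (by simp [hpN])) (Or.inl ENNReal.ofReal_ne_top)]
  have hgoal : eLpNorm (Q f) (ENNReal.ofReal p) μ₂ ≤
      ENNReal.ofReal (K * p₀ ^ N / 2 ^ N * p ^ N) * M ^ d := by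
    rcases le_or_gt p₀ p with hpp | hpp
    · refine le_trans (hQbound p hpp) ?_
      have : K * p ^ N ≤ K * p₀ ^ N / 2 ^ N * p ^ N := by
        have h1 : K ≤ K * p₀ ^ N / 2 ^ N := by
          rw [le_div_iff₀ h2N]
          nlinarith
        nlinarith
      exact mul_le_mul_left (ENNReal.ofReal_le_ofReal this) _
    · have hmono : eLpNorm (Q f) (ENNReal.ofReal p) μ₂ ≤
          eLpNorm (Q f) (ENNReal.ofReal p₀) μ₂ :=
        eLpNorm_le_eLpNorm_of_exponent_le (ENNReal.ofReal_le_ofReal hpp.le)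
          (hQmeas f hf hfLp).aestronglyMeasurable
      refine le_trans hmono (le_trans (hQbound p₀ le_rfl) ?_)
      have h2pN : (2:ℝ) ^ N ≤ p ^ N := Real.rpow_le_rpow (by norm_num) hp hNpos.le
      have : K * p₀ ^ N ≤ K * p₀ ^ N / 2 ^ N * p ^ N := by
        have hKp : (0:ℝ) < K * p₀ ^ N / 2 ^ N := by positivity
        calc K * p₀ ^ N = K * p₀ ^ N / 2 ^ N * 2 ^ N := by field_simp
          _ ≤ K * p₀ ^ N / 2 ^ N * p ^ N := by
              exact mul_le_mul_of_nonneg_left h2pN hKp.le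
      exact mul_le_mul_left (ENNReal.ofReal_le_ofReal this) _
  refine le_trans hgoal ?_
  rw [ENNReal.ofReal_mul (by positivity)]
  ring_nf
  exact le_refl _
end

section
/- Let m > 0 and define g : (0,1) → ℝ by g(x) = |ln x|^{1/m}, with (0,1) equipped with Lebesgue measure. Then there exist constants 0 < c ≤ C < ∞ such that c·p^{1/m} ≤ (∫₀¹ g(x)^p dx)^{1/p} ≤ C·p^{1/m} for all p ≥ 2; in particular sup_{p ≥ 2} |g|_p/p^{1/m} < ∞ while |g|_p/p^{1/m} does not tend to 0 as p → ∞. -/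
open MeasureTheory Filter Set
open scoped ENNReal Topology

/-!
Write `a = 1/m` and `q = a p`, so that `‖|log|^a‖_p ^ p = ∫₀¹ |log x| ^ q dx`.
On `(0, e^{-p})` the integrand is at least `p ^ q`, which gives `‖|log|^a‖_p ≥ e^{-1} p^a`.
Conversely `|log x| ≤ 2q x^{-1/(2q)}` on `(0,1]`, so the integrand is at most `(2q)^q x^{-1/2}`,
whose integral is `2 (2q)^q`; taking `p`-th roots gives `‖|log|^a‖_p ≤ 2 (2a)^a p^a`.
-/

lemma eLpNorm_abs_rpow_eq_lintegral {α : Type*} [MeasurableSpace α] (μ : Measure α)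
    (f : α → ℝ) (a : ℝ) {p : ℝ} (hp : 0 < p) :
    eLpNorm (fun x => |f x| ^ a) (ENNReal.ofReal p) μ
      = (∫⁻ x, ENNReal.ofReal (|f x| ^ (a * p)) ∂μ) ^ (1 / p) := by
  rw [eLpNorm_eq_lintegral_rpow_enorm_toReal (by simpa using hp) ENNReal.ofReal_ne_top,
    ENNReal.toReal_ofReal hp.le]
  congr 1
  refine lintegral_congr fun x => ?_
  rw [Real.enorm_eq_ofReal (by positivity), ENNReal.ofReal_rpow_of_nonneg (by positivity) hp.le,
    ← Real.rpow_mul (abs_nonneg _)]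

lemma Real.abs_log_rpow_le {x q : ℝ} (hx₀ : 0 < x) (hx₁ : x ≤ 1) (hq : 0 < q) :
    |Real.log x| ^ q ≤ (2 * q) ^ q * x ^ (-(1 / 2) : ℝ) := by
  have hlog : |Real.log x| ≤ 2 * q / x ^ (1 / (2 * q)) := by
    have h := Real.abs_log_mul_self_rpow_lt x (1 / (2 * q)) hx₀ hx₁ (by positivity)
    rw [abs_mul, abs_of_pos (Real.rpow_pos_of_pos hx₀ _), one_div_one_div,
      ← lt_div_iff₀ (by positivity)] at h
    exact h.le
  calc |Real.log x| ^ q ≤ (2 * q / x ^ (1 / (2 * q))) ^ q :=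
        Real.rpow_le_rpow (abs_nonneg _) hlog hq.le
    _ = (2 * q) ^ q * x ^ (-(1 / 2) : ℝ) := by
        rw [Real.div_rpow (by positivity) (by positivity), ← Real.rpow_mul hx₀.le,
          div_eq_mul_inv, ← Real.rpow_neg hx₀.le]
        congr 2
        field_simp

lemma lintegral_Ioo_zero_one_rpow_neg_half :
    ∫⁻ x in Ioo (0 : ℝ) 1, ENNReal.ofReal (x ^ (-(1 / 2) : ℝ)) = 2 := by
  have hint : IntegrableOn (fun x : ℝ => x ^ (-(1 / 2) : ℝ)) (Ioo 0 1) :=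
    (intervalIntegral.intervalIntegrable_rpow' (a := 0) (b := 1) (by norm_num)).1.mono_set
      Ioo_subset_Ioc_self
  have hval : ∫ x in Ioo (0 : ℝ) 1, x ^ (-(1 / 2) : ℝ) = 2 := by
    rw [← integral_Ioc_eq_integral_Ioo, ← intervalIntegral.integral_of_le zero_le_one,
      integral_rpow (Or.inl (by norm_num)), Real.one_rpow, Real.zero_rpow (by norm_num)]
    norm_num
  rw [← ofReal_integral_eq_lintegral_ofReal hint, hval, ENNReal.ofReal_ofNat]
  filter_upwards [ae_restrict_mem measurableSet_Ioo] with x hx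
  exact Real.rpow_nonneg hx.1.le _

lemma lintegral_abs_log_rpow_le {q : ℝ} (hq : 0 < q) :
    ∫⁻ x in Ioo (0 : ℝ) 1, ENNReal.ofReal (|Real.log x| ^ q)
      ≤ ENNReal.ofReal ((2 * q) ^ q * 2) := by
  calc ∫⁻ x in Ioo (0 : ℝ) 1, ENNReal.ofReal (|Real.log x| ^ q)
      ≤ ∫⁻ x in Ioo (0 : ℝ) 1,
          ENNReal.ofReal ((2 * q) ^ q) * ENNReal.ofReal (x ^ (-(1 / 2) : ℝ)) := by
        refine setLIntegral_mono (by fun_prop) fun x hx => ?_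
        rw [← ENNReal.ofReal_mul (by positivity)]
        exact ENNReal.ofReal_le_ofReal (Real.abs_log_rpow_le hx.1 hx.2.le hq)
    _ = ENNReal.ofReal ((2 * q) ^ q * 2) := by
        rw [lintegral_const_mul' _ _ ENNReal.ofReal_ne_top, lintegral_Ioo_zero_one_rpow_neg_half,
          ENNReal.ofReal_mul (by positivity), ENNReal.ofReal_ofNat]

lemma rpow_mul_exp_neg_le_lintegral_abs_log_rpow {q t : ℝ} (hq : 0 ≤ q) (ht : 0 ≤ t) :
    ENNReal.ofReal (t ^ q * Real.exp (-t))
      ≤ ∫⁻ x in Ioo (0 : ℝ) 1, ENNReal.ofReal (|Real.log x| ^ q) := by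
  have hsub : Ioo 0 (Real.exp (-t)) ⊆ Ioo (0 : ℝ) 1 :=
    Ioo_subset_Ioo_right (Real.exp_le_one_iff.2 (neg_nonpos.2 ht))
  calc ENNReal.ofReal (t ^ q * Real.exp (-t))
      = ∫⁻ _ in Ioo 0 (Real.exp (-t)), ENNReal.ofReal (t ^ q) := by
        rw [setLIntegral_const, Real.volume_Ioo, sub_zero, ENNReal.ofReal_mul (by positivity)]
    _ ≤ ∫⁻ x in Ioo 0 (Real.exp (-t)), ENNReal.ofReal (|Real.log x| ^ q) := by
        refine setLIntegral_mono (by fun_prop) fun x hx => ENNReal.ofReal_le_ofReal ?_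
        refine Real.rpow_le_rpow ht ?_ hq
        have hlog : Real.log x < -t := (Real.log_lt_iff_lt_exp hx.1).2 hx.2
        rw [abs_of_neg (by linarith)]
        linarith
    _ ≤ ∫⁻ x in Ioo (0 : ℝ) 1, ENNReal.ofReal (|Real.log x| ^ q) := lintegral_mono_set hsub

lemma eLpNorm_abs_log_rpow_ge {a p : ℝ} (ha : 0 ≤ a) (hp : 0 < p) :
    ENNReal.ofReal (Real.exp (-1) * p ^ a)
      ≤ eLpNorm (fun x : ℝ => |Real.log x| ^ a) (ENNReal.ofReal p)
          (volume.restrict (Ioo (0 : ℝ) 1)) := by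
  have hroot : (p ^ (a * p) * Real.exp (-p)) ^ (1 / p) = Real.exp (-1) * p ^ a := by
    rw [Real.mul_rpow (by positivity) (by positivity), ← Real.rpow_mul hp.le, ← Real.exp_mul,
      show a * p * (1 / p) = a by field_simp, show -p * (1 / p) = -1 by field_simp, mul_comm]
  rw [eLpNorm_abs_rpow_eq_lintegral _ _ _ hp, ← hroot,
    ← ENNReal.ofReal_rpow_of_nonneg (by positivity) (by positivity)]
  exact ENNReal.rpow_le_rpow
    (rpow_mul_exp_neg_le_lintegral_abs_log_rpow (by positivity) hp.le) (by positivity)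

lemma eLpNorm_abs_log_rpow_le {a p : ℝ} (ha : 0 < a) (hp : 1 ≤ p) :
    eLpNorm (fun x : ℝ => |Real.log x| ^ a) (ENNReal.ofReal p)
        (volume.restrict (Ioo (0 : ℝ) 1))
      ≤ ENNReal.ofReal (2 * (2 * a) ^ a * p ^ a) := by
  have hp₀ : 0 < p := by linarith
  have hroot : ((2 * (a * p)) ^ (a * p) * 2) ^ (1 / p) ≤ 2 * (2 * a) ^ a * p ^ a := by
    have htwo : (2 : ℝ) ^ (1 / p) ≤ 2 :=
      Real.rpow_le_self_of_one_le one_le_two ((div_le_one hp₀).2 hp)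
    rw [Real.mul_rpow (by positivity) (by positivity), ← Real.rpow_mul (by positivity),
      show a * p * (1 / p) = a by field_simp, ← mul_assoc, Real.mul_rpow (by positivity) hp₀.le]
    calc (2 * a) ^ a * p ^ a * 2 ^ (1 / p) ≤ (2 * a) ^ a * p ^ a * 2 := by gcongr
      _ = 2 * (2 * a) ^ a * p ^ a := by ring
  rw [eLpNorm_abs_rpow_eq_lintegral _ _ _ hp₀]
  calc (∫⁻ x in Ioo (0 : ℝ) 1, ENNReal.ofReal (|Real.log x| ^ (a * p))) ^ (1 / p)
      ≤ ENNReal.ofReal ((2 * (a * p)) ^ (a * p) * 2) ^ (1 / p) :=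
        ENNReal.rpow_le_rpow (lintegral_abs_log_rpow_le (by positivity)) (by positivity)
    _ ≤ ENNReal.ofReal (2 * (2 * a) ^ a * p ^ a) := by
        rw [ENNReal.ofReal_rpow_of_nonneg (by positivity) (by positivity)]
        exact ENNReal.ofReal_le_ofReal hroot

theorem stmt11 (m : ℝ) (hm : 0 < m) :
    ∃ c C : ℝ, 0 < c ∧ c ≤ C ∧
      (∀ p : ℝ, 2 ≤ p →
        ENNReal.ofReal (c * p ^ (1/m)) ≤
            eLpNorm (fun x : ℝ => |Real.log x| ^ (1/m)) (ENNReal.ofReal p)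
              (volume.restrict (Set.Ioo (0:ℝ) 1)) ∧
          eLpNorm (fun x : ℝ => |Real.log x| ^ (1/m)) (ENNReal.ofReal p)
              (volume.restrict (Set.Ioo (0:ℝ) 1)) ≤
            ENNReal.ofReal (C * p ^ (1/m))) ∧
      (⨆ p : {p : ℝ // 2 ≤ p},
          eLpNorm (fun x : ℝ => |Real.log x| ^ (1/m)) (ENNReal.ofReal (p : ℝ))
              (volume.restrict (Set.Ioo (0:ℝ) 1)) /
            ENNReal.ofReal ((p : ℝ) ^ (1/m))) < ⊤ ∧
      ¬ Filter.Tendsto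
          (fun p : ℝ =>
            eLpNorm (fun x : ℝ => |Real.log x| ^ (1/m)) (ENNReal.ofReal p)
                (volume.restrict (Set.Ioo (0:ℝ) 1)) /
              ENNReal.ofReal (p ^ (1/m)))
          Filter.atTop (𝓝 0) := by
  have ha : 0 < 1 / m := by positivity
  set c := Real.exp (-1)
  set C := max c (2 * (2 * (1 / m)) ^ (1 / m))
  have hc : 0 < c := Real.exp_pos _
  have hlow (p : ℝ) (hp : 2 ≤ p) := eLpNorm_abs_log_rpow_ge ha.le (p := p) (by linarith)
  have hup (p : ℝ) (hp : 2 ≤ p) :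
      eLpNorm (fun x : ℝ => |Real.log x| ^ (1 / m)) (ENNReal.ofReal p)
        (volume.restrict (Ioo (0 : ℝ) 1)) ≤ ENNReal.ofReal (C * p ^ (1 / m)) :=
    (eLpNorm_abs_log_rpow_le ha (by linarith)).trans <| ENNReal.ofReal_le_ofReal <|
      mul_le_mul_of_nonneg_right (le_max_right _ _) (by positivity)
  refine ⟨c, C, hc, le_max_left _ _, fun p hp => ⟨hlow p hp, hup p hp⟩, ?_, ?_⟩
  · refine (iSup_le fun p => ENNReal.div_le_of_le_mul ?_).trans_lt (ENNReal.ofReal_lt_top (r := C))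
    rw [← ENNReal.ofReal_mul (hc.le.trans (le_max_left _ _))]
    exact hup p p.2
  · refine fun h => (ge_of_tendsto h ?_).not_gt (ENNReal.ofReal_pos.2 hc)
    filter_upwards [eventually_ge_atTop 2] with p hp
    rw [ENNReal.le_div_iff_mul_le (Or.inl (ENNReal.ofReal_pos.2 (by positivity)).ne')
      (Or.inl ENNReal.ofReal_ne_top), ← ENNReal.ofReal_mul hc.le]
    exact hlow p hp
end

section
/- Let m > 0 and let (S_n, 𝓕_n) be a martingale with sup_n sup_{p ≥ 2} |S_n|_p/p^{1/m} < ∞. Then S_n converges almost surely to a random variable S, and for every Δ ∈ (0, m): lim_{n → ∞} sup_{p ≥ 2} |S_n − S|_p/p^{1/(m−Δ)} = 0. -/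
open MeasureTheory Filter Set
open scoped ENNReal Topology NNReal

/-!
A martingale bounded in `L¹` converges almost surely, say to `S`. Fatou's lemma carries the bound
`‖S n‖_p ≤ C p^{1/m}` over to `S`, so `‖S n - S‖_p ≤ 2C p^{1/m}` for all `p ≥ 2`; after division
by `p^{1/(m-Δ)}` the exponents `p ≥ q` contribute at most `2C q^{1/m - 1/(m-Δ)}`, which is small
for large `q`. On the remaining range `2 ≤ p ≤ q` it suffices that `S n → S` in `L^q`, which is
Vitali's theorem: `(S n)` is bounded in `L^{2q}`, hence uniformly integrable in `L^q`.
-/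

section MomentGrowth

variable {Ω : Type*} [MeasurableSpace Ω] {μ : Measure Ω}

theorem unifIntegrable_of_eLpNorm_mul_two_le {ι β : Type*} [NormedAddCommGroup β]
    {f : ι → Ω → β} {q M : ℝ≥0∞} (hq : 1 ≤ q) (hq_top : q ≠ ∞) (hM : M ≠ ∞)
    (hf : ∀ i, AEStronglyMeasurable (f i) μ) (hbdd : ∀ i, eLpNorm (f i) (q * 2) μ ≤ M) :
    UnifIntegrable f q μ := by
  refine unifIntegrable_of hq hq_top hf fun ε hε => ?_
  have hM2 : M ^ (2:ℝ) ≠ ∞ := ENNReal.rpow_ne_top_of_nonneg zero_le_two hM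
  obtain ⟨n, hn⟩ := ENNReal.exists_inv_nat_lt
    (ENNReal.div_ne_zero.2 ⟨(ENNReal.ofReal_pos.2 hε).ne', hM2⟩)
  have hn0 : (n : ℝ≥0) ≠ 0 := by rintro h; simp_all
  refine ⟨n, fun i => ?_⟩
  have hpt : ∀ x, ‖{x | (n : ℝ≥0) ≤ ‖f i x‖₊}.indicator (f i) x‖ₑ ≤
      (n : ℝ≥0)⁻¹ * ‖‖f i x‖ₑ ^ (2:ℝ)‖ₑ := by
    intro x
    by_cases hx : (n : ℝ≥0) ≤ ‖f i x‖₊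
    · rw [indicator_of_mem (show x ∈ {x | (n : ℝ≥0) ≤ ‖f i x‖₊} from hx), enorm_eq_self,
        enorm_eq_nnnorm, ENNReal.rpow_two]
      norm_cast
      calc ‖f i x‖₊ = ‖f i x‖₊ * 1 := (mul_one _).symm
        _ ≤ ‖f i x‖₊ * (‖f i x‖₊ / n) := by
          gcongr; exact (one_le_div (pos_iff_ne_zero.2 hn0)).2 hx
        _ = (n : ℝ≥0)⁻¹ * ‖f i x‖₊ ^ 2 := by ring
    · rw [indicator_of_notMem (show x ∉ {x | (n : ℝ≥0) ≤ ‖f i x‖₊} from hx), enorm_zero]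
      exact zero_le
  calc eLpNorm ({x | (n : ℝ≥0) ≤ ‖f i x‖₊}.indicator (f i)) q μ
      ≤ (n : ℝ≥0)⁻¹ • eLpNorm (‖f i ·‖ₑ ^ (2:ℝ)) q μ :=
        eLpNorm_le_nnreal_smul_eLpNorm_of_ae_le_mul' (ae_of_all _ hpt) q
    _ = (n : ℝ≥0∞)⁻¹ * eLpNorm (f i) (q * 2) μ ^ (2:ℝ) := by
        rw [eLpNorm_enorm_rpow _ two_pos, ENNReal.ofReal_ofNat, ENNReal.smul_def, smul_eq_mul,
          ENNReal.coe_inv hn0, ENNReal.coe_natCast]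
    _ ≤ (n : ℝ≥0∞)⁻¹ * M ^ (2:ℝ) := by gcongr; exact hbdd i
    _ ≤ ENNReal.ofReal ε := ENNReal.mul_le_of_le_div hn.le

theorem tendsto_eLpNorm_sub_of_ae_tendsto_of_eLpNorm_mul_two_le [IsFiniteMeasure μ]
    {β : Type*} [NormedAddCommGroup β] {f : ℕ → Ω → β} {g : Ω → β} {q M : ℝ≥0∞}
    (hq : 1 ≤ q) (hq_top : q ≠ ∞) (hM : M ≠ ∞) (hf : ∀ n, AEStronglyMeasurable (f n) μ)
    (hbdd : ∀ n, eLpNorm (f n) (q * 2) μ ≤ M)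
    (hfg : ∀ᵐ x ∂μ, Tendsto (fun n => f n x) atTop (𝓝 (g x))) :
    Tendsto (fun n => eLpNorm (f n - g) q μ) atTop (𝓝 0) := by
  have hg : MemLp g (q * 2) μ :=
    ⟨aestronglyMeasurable_of_tendsto_ae _ hf hfg,
      (Lp.eLpNorm_le_of_ae_tendsto (Eventually.of_forall hbdd) hf hfg).trans_lt hM.lt_top⟩
  exact tendsto_Lp_finite_of_tendsto_ae hq hq_top hf
    (hg.mono_exponent (le_mul_of_one_le_right' one_le_two))
    (unifIntegrable_of_eLpNorm_mul_two_le hq hq_top hM hf hbdd) hfg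

noncomputable def momentGrowthNorm (X : Ω → ℝ) (a : ℝ) (μ : Measure Ω) : ℝ≥0∞ :=
  ⨆ p : {p : ℝ // 2 ≤ p}, eLpNorm X (ENNReal.ofReal p) μ / ENNReal.ofReal ((p : ℝ) ^ a)

theorem eLpNorm_le_momentGrowthNorm_mul (X : Ω → ℝ) (a : ℝ) {p : ℝ} (hp : 2 ≤ p) :
    eLpNorm X (ENNReal.ofReal p) μ ≤ momentGrowthNorm X a μ * ENNReal.ofReal (p ^ a) := by
  have hpa : ENNReal.ofReal (p ^ a) ≠ 0 :=
    (ENNReal.ofReal_pos.2 (Real.rpow_pos_of_pos (by linarith) a)).ne'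
  rw [← ENNReal.div_le_iff_le_mul (Or.inl hpa) (Or.inl ENNReal.ofReal_ne_top)]
  exact le_iSup_of_le (⟨p, hp⟩ : {p : ℝ // 2 ≤ p}) le_rfl

theorem momentGrowthNorm_le_of_forall_le {X : Ω → ℝ} {a : ℝ} {K : ℝ≥0∞}
    (h : ∀ p : ℝ, 2 ≤ p → eLpNorm X (ENNReal.ofReal p) μ ≤ K * ENNReal.ofReal (p ^ a)) :
    momentGrowthNorm X a μ ≤ K :=
  iSup_le fun p => ENNReal.div_le_of_le_mul (h p p.2)

theorem momentGrowthNorm_sub_le {X Y : Ω → ℝ} (hX : AEStronglyMeasurable X μ)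
    (hY : AEStronglyMeasurable Y μ) (a : ℝ) :
    momentGrowthNorm (X - Y) a μ ≤ momentGrowthNorm X a μ + momentGrowthNorm Y a μ :=
  momentGrowthNorm_le_of_forall_le fun p hp => by
    rw [add_mul]
    exact (eLpNorm_sub_le hX hY (ENNReal.one_le_ofReal.2 (by linarith))).trans
      (add_le_add (eLpNorm_le_momentGrowthNorm_mul X a hp) (eLpNorm_le_momentGrowthNorm_mul Y a hp))

theorem momentGrowthNorm_le_of_ae_tendsto {X : ℕ → Ω → ℝ} {Y : Ω → ℝ} {a : ℝ} {K : ℝ≥0∞}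
    (hX : ∀ n, AEStronglyMeasurable (X n) μ)
    (hXY : ∀ᵐ ω ∂μ, Tendsto (fun n => X n ω) atTop (𝓝 (Y ω)))
    (hK : ∀ n, momentGrowthNorm (X n) a μ ≤ K) :
    momentGrowthNorm Y a μ ≤ K :=
  momentGrowthNorm_le_of_forall_le fun p hp =>
    Lp.eLpNorm_le_of_ae_tendsto (Eventually.of_forall fun n =>
      (eLpNorm_le_momentGrowthNorm_mul (X n) a hp).trans (by gcongr; exact hK n)) hX hXY

theorem eLpNorm_one_le_momentGrowthNorm_mul [IsProbabilityMeasure μ] {X : Ω → ℝ}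
    (hX : AEStronglyMeasurable X μ) (a : ℝ) :
    eLpNorm X 1 μ ≤ momentGrowthNorm X a μ * ENNReal.ofReal (2 ^ a) :=
  (eLpNorm_le_eLpNorm_of_exponent_le (by simp) hX).trans
    (eLpNorm_le_momentGrowthNorm_mul X a le_rfl)

theorem momentGrowthNorm_le_max [IsProbabilityMeasure μ] {X : Ω → ℝ}
    (hX : AEStronglyMeasurable X μ) {a b q : ℝ} (hab : a ≤ b) (hb : 0 ≤ b) (hq : 2 ≤ q) :
    momentGrowthNorm X b μ ≤
      max (eLpNorm X (ENNReal.ofReal q) μ)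
        (momentGrowthNorm X a μ * ENNReal.ofReal (q ^ (a - b))) := by
  refine iSup_le fun ⟨p, hp⟩ => ?_
  have hp0 : 0 < p := by linarith
  rcases le_total p q with hpq | hqp
  · refine le_max_of_le_left (ENNReal.div_le_of_le_mul ?_)
    calc eLpNorm X (ENNReal.ofReal p) μ
        ≤ eLpNorm X (ENNReal.ofReal q) μ :=
          eLpNorm_le_eLpNorm_of_exponent_le (ENNReal.ofReal_le_ofReal hpq) hX
      _ ≤ eLpNorm X (ENNReal.ofReal q) μ * ENNReal.ofReal (p ^ b) :=
          le_mul_of_one_le_right' (ENNReal.one_le_ofReal.2 (Real.one_le_rpow (by linarith) hb))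
  · refine le_max_of_le_right ?_
    calc eLpNorm X (ENNReal.ofReal p) μ / ENNReal.ofReal (p ^ b)
        ≤ momentGrowthNorm X a μ * ENNReal.ofReal (p ^ a) / ENNReal.ofReal (p ^ b) := by
          gcongr; exact eLpNorm_le_momentGrowthNorm_mul X a hp
      _ = momentGrowthNorm X a μ * ENNReal.ofReal (p ^ (a - b)) := by
          rw [mul_div_assoc, ← ENNReal.ofReal_div_of_pos (Real.rpow_pos_of_pos hp0 b),
            ← Real.rpow_sub hp0]
      _ ≤ momentGrowthNorm X a μ * ENNReal.ofReal (q ^ (a - b)) := by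
          gcongr _ * ENNReal.ofReal ?_
          exact Real.rpow_le_rpow_of_nonpos (by linarith) hqp (sub_nonpos.2 hab)

theorem tendsto_momentGrowthNorm_zero_of_tendsto_eLpNorm [IsProbabilityMeasure μ] {X : ℕ → Ω → ℝ}
    {a b : ℝ} {K : ℝ≥0∞} (hX : ∀ n, AEStronglyMeasurable (X n) μ)
    (hK : ∀ n, momentGrowthNorm (X n) a μ ≤ K) (hK_top : K ≠ ∞)
    (hlim : ∀ q : ℝ, 2 ≤ q → Tendsto (fun n => eLpNorm (X n) (ENNReal.ofReal q) μ) atTop (𝓝 0))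
    (hab : a < b) (hb : 0 ≤ b) :
    Tendsto (fun n => momentGrowthNorm (X n) b μ) atTop (𝓝 0) := by
  rw [ENNReal.tendsto_atTop_zero]
  intro ε hε
  have htail : Tendsto (fun q : ℝ => K * ENNReal.ofReal (q ^ (a - b))) atTop (𝓝 0) := by
    have := tendsto_rpow_neg_atTop (sub_pos.2 hab)
    rw [neg_sub] at this
    simpa using ENNReal.Tendsto.const_mul (ENNReal.tendsto_ofReal this) (Or.inr hK_top)
  obtain ⟨q, hqε, hq⟩ := ((htail.eventually_lt_const hε).and (eventually_ge_atTop 2)).exists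
  obtain ⟨N, hN⟩ := ENNReal.tendsto_atTop_zero.1 (hlim q hq) ε hε
  exact ⟨N, fun n hn => (momentGrowthNorm_le_max (hX n) hab.le hb hq).trans
    (max_le (hN n hn) ((mul_le_mul_left (hK n) _).trans hqε.le))⟩

theorem tendsto_momentGrowthNorm_sub_of_ae_tendsto [IsProbabilityMeasure μ] {X : ℕ → Ω → ℝ}
    {Y : Ω → ℝ} {a b : ℝ} {K : ℝ≥0∞} (hX : ∀ n, AEStronglyMeasurable (X n) μ)
    (hXY : ∀ᵐ ω ∂μ, Tendsto (fun n => X n ω) atTop (𝓝 (Y ω)))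
    (hK : ∀ n, momentGrowthNorm (X n) a μ ≤ K) (hK_top : K ≠ ∞) (hab : a < b) (hb : 0 ≤ b) :
    Tendsto (fun n => momentGrowthNorm (X n - Y) b μ) atTop (𝓝 0) := by
  have hY : AEStronglyMeasurable Y μ := aestronglyMeasurable_of_tendsto_ae _ hX hXY
  have hKY : momentGrowthNorm Y a μ ≤ K := momentGrowthNorm_le_of_ae_tendsto hX hXY hK
  refine tendsto_momentGrowthNorm_zero_of_tendsto_eLpNorm (fun n => (hX n).sub hY)
    (fun n => (momentGrowthNorm_sub_le (hX n) hY a).trans (add_le_add (hK n) hKY))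
    (ENNReal.add_ne_top.2 ⟨hK_top, hK_top⟩) (fun q hq => ?_) hab hb
  have hq2 : ENNReal.ofReal q * 2 = ENNReal.ofReal (q * 2) := by
    rw [ENNReal.ofReal_mul (by linarith), ENNReal.ofReal_ofNat]
  refine tendsto_eLpNorm_sub_of_ae_tendsto_of_eLpNorm_mul_two_le
    (M := K * ENNReal.ofReal ((q * 2) ^ a))
    (ENNReal.one_le_ofReal.2 (by linarith)) ENNReal.ofReal_ne_top
    (ENNReal.mul_ne_top hK_top ENNReal.ofReal_ne_top) hX (fun n => ?_) hXY
  rw [hq2]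
  exact (eLpNorm_le_momentGrowthNorm_mul (X n) a (by linarith)).trans (by gcongr; exact hK n)

end MomentGrowth

theorem stmt17_general {Ω : Type*} [m0 : MeasurableSpace Ω] (μ : Measure Ω) [IsProbabilityMeasure μ]
    (ℱ : Filtration ℕ m0) (S : ℕ → Ω → ℝ) (hmart : Martingale S ℱ μ)
    (m : ℝ)
    (hbdd : (⨆ n : ℕ, ⨆ p : {p : ℝ // 2 ≤ p},
      eLpNorm (S n) (ENNReal.ofReal (p : ℝ)) μ / ENNReal.ofReal ((p : ℝ) ^ (1/m))) < ⊤) :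
    ∃ Slim : Ω → ℝ,
      (∀ᵐ ω ∂μ, Filter.Tendsto (fun n => S n ω) Filter.atTop (𝓝 (Slim ω))) ∧
      ∀ Δ : ℝ, Δ ∈ Set.Ioo 0 m →
        Filter.Tendsto
          (fun n : ℕ => ⨆ p : {p : ℝ // 2 ≤ p},
            eLpNorm (fun ω => S n ω - Slim ω) (ENNReal.ofReal (p : ℝ)) μ /
              ENNReal.ofReal ((p : ℝ) ^ (1/(m - Δ))))
          Filter.atTop (𝓝 0) := by
  set C := ⨆ n, momentGrowthNorm (S n) (1 / m) μ
  have hC : ∀ n, momentGrowthNorm (S n) (1 / m) μ ≤ C := le_iSup _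
  have hC_top : C ≠ ⊤ := hbdd.ne
  have hS : ∀ n, AEStronglyMeasurable (S n) μ :=
    fun n => ((hmart.stronglyAdapted n).mono (ℱ.le n)).aestronglyMeasurable
  have hL1 : ∀ n, eLpNorm (S n) 1 μ ≤ (C * ENNReal.ofReal (2 ^ (1 / m))).toNNReal := fun n => by
    rw [ENNReal.coe_toNNReal (ENNReal.mul_ne_top hC_top ENNReal.ofReal_ne_top)]
    exact (eLpNorm_one_le_momentGrowthNorm_mul (hS n) _).trans (by gcongr; exact hC n)
  have h_ae := hmart.submartingale.ae_tendsto_limitProcess hL1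
  refine ⟨_, h_ae, fun Δ ⟨hΔ, hΔm⟩ => ?_⟩
  exact tendsto_momentGrowthNorm_sub_of_ae_tendsto hS h_ae hC hC_top
    (one_div_lt_one_div_of_lt (sub_pos.2 hΔm) (by linarith)) (one_div_nonneg.2 (sub_pos.2 hΔm).le)

theorem stmt17 {Ω : Type*} [m0 : MeasurableSpace Ω] (μ : Measure Ω) [IsProbabilityMeasure μ]
    (ℱ : Filtration ℕ m0) (S : ℕ → Ω → ℝ) (hmart : Martingale S ℱ μ)
    (m : ℝ) (hm : 0 < m)
    (hbdd : (⨆ n : ℕ, ⨆ p : {p : ℝ // 2 ≤ p},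
      eLpNorm (S n) (ENNReal.ofReal (p : ℝ)) μ / ENNReal.ofReal ((p : ℝ) ^ (1/m))) < ⊤) :
    ∃ Slim : Ω → ℝ,
      (∀ᵐ ω ∂μ, Filter.Tendsto (fun n => S n ω) Filter.atTop (𝓝 (Slim ω))) ∧
      ∀ Δ : ℝ, Δ ∈ Set.Ioo 0 m →
        Filter.Tendsto
          (fun n : ℕ => ⨆ p : {p : ℝ // 2 ≤ p},
            eLpNorm (fun ω => S n ω - Slim ω) (ENNReal.ofReal (p : ℝ)) μ /
              ENNReal.ofReal ((p : ℝ) ^ (1/(m - Δ))))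
          Filter.atTop (𝓝 0) :=
  stmt17_general (m0 := m0) μ ℱ S hmart m hbdd
end

section
/- Let m > 0, Δ > 0 and let (S_n, 𝓕_n) be a martingale with K := sup_n sup_{p ≥ 2} |S_n|_p/p^{1/m} < ∞; let S be its almost sure limit and set γ_n = (E(S_n − S)²)^{1/2}. Then there exists a constant C = C(m, Δ, K) ∈ (0,∞) such that for every n with 0 < γ_n < 1/e: sup_{p ≥ 2} |S_n − S|_p/p^{Δ + 1/m} ≤ C·|log γ_n|^{−Δ}. -/
/-!
Put `X = S n - Slim` and `γ = ‖X‖₂`. Fatou's lemma and the triangle inequality give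
`‖X‖_q ≤ 2 K q^(1/m)` for every `q ≥ 2`. Cauchy–Schwarz applied to `|X|^p = |X| · |X|^(p-1)` gives
`‖X‖_p ≤ γ^(1/p) ‖X‖_(2p-2)^((p-1)/p)`, and `γ^(1/p) = exp (-L/p)` with `L = |log γ|` is at most
`(Δ/e)^Δ (L/p)^(-Δ)` because `t ↦ t^Δ exp (-t)` is maximal at `t = Δ`.
-/

open MeasureTheory Filter Set
open scoped ENNReal Topology

namespace Real

theorem rpow_mul_exp_neg_le {Δ t : ℝ} (hΔ : 0 < Δ) (ht : 0 < t) :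
    t ^ Δ * exp (-t) ≤ Δ ^ Δ * exp (-Δ) := by
  rw [rpow_def_of_pos ht, rpow_def_of_pos hΔ, ← exp_add, ← exp_add, exp_le_exp]
  have h := log_le_sub_one_of_pos (div_pos ht hΔ)
  rw [log_div ht.ne' hΔ.ne', le_sub_iff_add_le, div_eq_mul_inv] at h
  have := mul_le_mul_of_nonneg_right h hΔ.le
  rw [add_mul, mul_assoc, inv_mul_cancel₀ hΔ.ne', mul_one] at this
  linarith

theorem exp_neg_le_mul_rpow_neg {Δ t : ℝ} (hΔ : 0 < Δ) (ht : 0 < t) :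
    exp (-t) ≤ Δ ^ Δ * exp (-Δ) * t ^ (-Δ) := by
  calc exp (-t) = t ^ (-Δ) * (t ^ Δ * exp (-t)) := by
        rw [← mul_assoc, ← rpow_add ht, neg_add_cancel, rpow_zero, one_mul]
    _ ≤ t ^ (-Δ) * (Δ ^ Δ * exp (-Δ)) :=
        mul_le_mul_of_nonneg_left (rpow_mul_exp_neg_le hΔ ht) (by positivity)
    _ = _ := mul_comm _ _

theorem rpow_inv_le_mul_abs_log_rpow_neg {Δ γ p : ℝ} (hΔ : 0 < Δ) (hγ₀ : 0 < γ)
    (hγ₁ : γ < 1) (hp : 0 < p) :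
    γ ^ p⁻¹ ≤ Δ ^ Δ * exp (-Δ) * |log γ| ^ (-Δ) * p ^ Δ := by
  have hL : 0 < |log γ| := abs_pos.mpr (log_neg hγ₀ hγ₁).ne
  have hγ : γ ^ p⁻¹ = exp (-(|log γ| / p)) := by
    rw [rpow_def_of_pos hγ₀, abs_of_neg (log_neg hγ₀ hγ₁)]
    ring_nf
  calc γ ^ p⁻¹ ≤ Δ ^ Δ * exp (-Δ) * (|log γ| / p) ^ (-Δ) :=
        hγ ▸ exp_neg_le_mul_rpow_neg hΔ (div_pos hL hp)
    _ = _ := by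
      rw [div_rpow hL.le hp.le, rpow_neg hp.le, div_inv_eq_mul, ← mul_assoc]

theorem mul_rpow_le_max_one_mul {x y s : ℝ} (hx : 0 ≤ x) (hy : 1 ≤ y) (hs₀ : 0 ≤ s)
    (hs₁ : s ≤ 1) : (x * y) ^ s ≤ max 1 x * y := by
  rw [mul_rpow hx (by linarith)]
  gcongr
  · calc x ^ s ≤ (max 1 x) ^ s := by gcongr; exact le_max_right _ _
      _ ≤ max 1 x := rpow_le_self_of_one_le (le_max_left _ _) hs₁
  · exact rpow_le_self_of_one_le hy hs₁

theorem rpow_inv_mul_rpow_le {m Δ M γ p : ℝ} (hm : 0 < m) (hΔ : 0 < Δ) (hM : 0 ≤ M)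
    (hγ₀ : 0 < γ) (hγ₁ : γ < 1) (hp : 1 ≤ p) :
    γ ^ p⁻¹ * (M * (2 * p - 2) ^ (1 / m)) ^ ((p - 1) / p) ≤
      max 1 (M * 2 ^ (1 / m)) * (Δ ^ Δ * exp (-Δ)) * |log γ| ^ (-Δ) * p ^ (Δ + 1 / m) := by
  have hp₀ : 0 < p := by linarith
  have hbase : 0 ≤ M * (2 * p - 2) ^ (1 / m) := mul_nonneg hM (rpow_nonneg (by linarith) _)
  have hmoment : (M * (2 * p - 2) ^ (1 / m)) ^ ((p - 1) / p) ≤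
      max 1 (M * 2 ^ (1 / m)) * p ^ (1 / m) :=
    calc (M * (2 * p - 2) ^ (1 / m)) ^ ((p - 1) / p)
        ≤ (M * 2 ^ (1 / m) * p ^ (1 / m)) ^ ((p - 1) / p) := by
          rw [mul_assoc, ← mul_rpow zero_le_two hp₀.le]
          gcongr <;> linarith
      _ ≤ max 1 (M * 2 ^ (1 / m)) * p ^ (1 / m) :=
          mul_rpow_le_max_one_mul (by positivity) (one_le_rpow hp (by positivity))
            (div_nonneg (by linarith) hp₀.le) (div_le_one_of_le₀ (by linarith) hp₀.le)
  calc γ ^ p⁻¹ * (M * (2 * p - 2) ^ (1 / m)) ^ ((p - 1) / p)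
      ≤ (Δ ^ Δ * exp (-Δ) * |log γ| ^ (-Δ) * p ^ Δ) * (max 1 (M * 2 ^ (1 / m)) * p ^ (1 / m)) :=
        mul_le_mul (rpow_inv_le_mul_abs_log_rpow_neg hΔ hγ₀ hγ₁ hp₀) hmoment (rpow_nonneg hbase _)
          (by positivity)
    _ = _ := by rw [rpow_add hp₀]; ring

end Real

namespace MeasureTheory

variable {α E : Type*} [MeasurableSpace α] {μ : Measure α} [NormedAddCommGroup E]

theorem eLpNorm_rpow_le_eLpNorm_two_mul {f : α → E} (hf : AEStronglyMeasurable f μ) {p : ℝ}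
    (hp : 1 < p) :
    eLpNorm f (ENNReal.ofReal p) μ ^ p ≤
      eLpNorm f 2 μ * eLpNorm f (ENNReal.ofReal (2 * p - 2)) μ ^ (p - 1) := by
  have hp₀ : 0 < p := by linarith
  have hp₁ : 0 < p - 1 := by linarith
  have holder := eLpNorm_le_eLpNorm_mul_eLpNorm_of_nnnorm (p := 2) (q := 2) (r := 1) hf
    ((Real.continuous_rpow_const hp₁.le).comp_aestronglyMeasurable hf.norm)
    (fun e (r : ℝ) => ‖e‖ * r) 1 (by filter_upwards with x; simp [nnnorm_mul])
  calc eLpNorm f (ENNReal.ofReal p) μ ^ p = eLpNorm (fun x => ‖f x‖ ^ p) 1 μ := by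
        rw [eLpNorm_norm_rpow f hp₀, one_mul]
    _ = eLpNorm (fun x => ‖f x‖ * ‖f x‖ ^ (p - 1)) 1 μ := by
        congr 1; ext x
        rw [← Real.rpow_one_add' (norm_nonneg _) (by linarith), add_sub_cancel]
    _ ≤ eLpNorm f 2 μ * eLpNorm (fun x => ‖f x‖ ^ (p - 1)) 2 μ := by simpa using holder
    _ = eLpNorm f 2 μ * eLpNorm f (ENNReal.ofReal (2 * p - 2)) μ ^ (p - 1) := by
        rw [eLpNorm_norm_rpow f hp₁, ← ENNReal.ofReal_ofNat 2,
          ← ENNReal.ofReal_mul zero_le_two]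
        ring_nf

theorem eLpNorm_le_of_moment_growth {f : α → E} (hf : AEStronglyMeasurable f μ)
    {m Δ M γ p : ℝ} (hm : 0 < m) (hΔ : 0 < Δ) (hM : 0 ≤ M) (hγ₀ : 0 < γ) (hγ₁ : γ < 1)
    (hf₂ : eLpNorm f 2 μ ≤ ENNReal.ofReal γ)
    (hmoment : ∀ q : ℝ, 2 ≤ q → eLpNorm f (ENNReal.ofReal q) μ ≤ ENNReal.ofReal (M * q ^ (1 / m)))
    (hp : 2 ≤ p) :
    eLpNorm f (ENNReal.ofReal p) μ ≤ ENNReal.ofReal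
      (max 1 (M * 2 ^ (1 / m)) * (Δ ^ Δ * Real.exp (-Δ)) * |Real.log γ| ^ (-Δ) *
        p ^ (Δ + 1 / m)) := by
  have hp₀ : 0 < p := by linarith
  have hbase : 0 ≤ M * (2 * p - 2) ^ (1 / m) :=
    mul_nonneg hM (Real.rpow_nonneg (by linarith) _)
  calc eLpNorm f (ENNReal.ofReal p) μ
      ≤ (eLpNorm f 2 μ * eLpNorm f (ENNReal.ofReal (2 * p - 2)) μ ^ (p - 1)) ^ p⁻¹ :=
        (ENNReal.le_rpow_inv_iff hp₀).2 (eLpNorm_rpow_le_eLpNorm_two_mul hf (by linarith))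
    _ ≤ (ENNReal.ofReal γ * ENNReal.ofReal (M * (2 * p - 2) ^ (1 / m)) ^ (p - 1)) ^ p⁻¹ := by
        gcongr
        · linarith
        · exact hmoment _ (by linarith)
    _ = ENNReal.ofReal (γ ^ p⁻¹ * (M * (2 * p - 2) ^ (1 / m)) ^ ((p - 1) / p)) := by
        rw [ENNReal.ofReal_rpow_of_nonneg hbase (by linarith), ← ENNReal.ofReal_mul hγ₀.le,
          ENNReal.ofReal_rpow_of_nonneg (by positivity) (inv_nonneg.2 hp₀.le),
          Real.mul_rpow hγ₀.le (Real.rpow_nonneg hbase _), ← Real.rpow_mul hbase,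
          div_eq_mul_inv (p - 1)]
    _ ≤ _ := ENNReal.ofReal_le_ofReal (Real.rpow_inv_mul_rpow_le hm hΔ hM hγ₀ hγ₁ (by linarith))

theorem exists_eLpNorm_le_mul_rpow_of_iSup_lt_top {ι : Type*} {f : ι → α → E} {a : ℝ}
    (h : (⨆ i, ⨆ p : {p : ℝ // 2 ≤ p},
      eLpNorm (f i) (ENNReal.ofReal p) μ / ENNReal.ofReal ((p : ℝ) ^ a)) < ⊤) :
    ∃ K : ℝ, 0 ≤ K ∧ ∀ i (q : ℝ), 2 ≤ q →
      eLpNorm (f i) (ENNReal.ofReal q) μ ≤ ENNReal.ofReal (K * q ^ a) := by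
  obtain ⟨K, hK₀, hK, -⟩ := ENNReal.lt_iff_exists_real_btwn.1 h
  refine ⟨K, hK₀, fun i q hq => ?_⟩
  rw [ENNReal.ofReal_mul hK₀, ← ENNReal.div_le_iff
    (by simpa using Real.rpow_pos_of_pos (by linarith) a) ENNReal.ofReal_ne_top]
  exact (le_iSup₂_of_le i ⟨q, hq⟩ le_rfl).trans hK.le

theorem eLpNorm_sub_lim_le {S : ℕ → α → E} {g : α → E}
    (hS : ∀ n, AEStronglyMeasurable (S n) μ)
    (hlim : ∀ᵐ x ∂μ, Tendsto (fun n => S n x) atTop (𝓝 (g x))) {p B : ℝ≥0∞} (hp : 1 ≤ p)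
    (hB : ∀ n, eLpNorm (S n) p μ ≤ B) (n : ℕ) :
    eLpNorm (S n - g) p μ ≤ 2 * B := by
  refine (eLpNorm_sub_le (hS n) (aestronglyMeasurable_of_tendsto_ae atTop hS hlim) hp).trans ?_
  rw [two_mul]
  exact add_le_add (hB n) (Lp.eLpNorm_le_of_ae_tendsto (Eventually.of_forall hB) hS hlim)

theorem MemLp.eLpNorm_two_eq_ofReal_integral_sq {f : α → ℝ} (hf : MemLp f 2 μ) :
    eLpNorm f 2 μ = ENNReal.ofReal ((∫ x, f x ^ 2 ∂μ) ^ ((1 : ℝ) / 2)) := by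
  rw [hf.eLpNorm_eq_integral_rpow_norm two_ne_zero ENNReal.ofNat_ne_top]
  simp

end MeasureTheory

theorem stmt19_general {Ω : Type*} [m0 : MeasurableSpace Ω] (μ : Measure Ω)
    (ℱ : Filtration ℕ m0) (S : ℕ → Ω → ℝ) (hmart : Martingale S ℱ μ)
    (m Δ : ℝ) (hm : 0 < m) (hΔ : 0 < Δ)
    (hK : (⨆ n : ℕ, ⨆ p : {p : ℝ // 2 ≤ p},
      eLpNorm (S n) (ENNReal.ofReal (p : ℝ)) μ / ENNReal.ofReal ((p : ℝ) ^ (1/m))) < ⊤)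
    (Slim : Ω → ℝ)
    (hSlim : ∀ᵐ ω ∂μ, Filter.Tendsto (fun n => S n ω) Filter.atTop (𝓝 (Slim ω))) :
    ∃ C : ℝ, 0 < C ∧ ∀ n : ℕ,
      0 < (∫ ω, (S n ω - Slim ω) ^ 2 ∂μ) ^ ((1:ℝ)/2) →
      (∫ ω, (S n ω - Slim ω) ^ 2 ∂μ) ^ ((1:ℝ)/2) < Real.exp (-1) →
      (⨆ p : {p : ℝ // 2 ≤ p},
          eLpNorm (fun ω => S n ω - Slim ω) (ENNReal.ofReal (p : ℝ)) μ /
            ENNReal.ofReal ((p : ℝ) ^ (Δ + 1/m))) ≤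
        ENNReal.ofReal
          (C * |Real.log ((∫ ω, (S n ω - Slim ω) ^ 2 ∂μ) ^ ((1:ℝ)/2))| ^ (-Δ)) := by
  have hSmeas n : AEStronglyMeasurable (S n) μ :=
    ((hmart.stronglyAdapted n).mono (ℱ.le n)).aestronglyMeasurable
  obtain ⟨K, hK₀, hSK⟩ := exists_eLpNorm_le_mul_rpow_of_iSup_lt_top hK
  have hmoment n (q : ℝ) (hq : 2 ≤ q) :
      eLpNorm (S n - Slim) (ENNReal.ofReal q) μ ≤ ENNReal.ofReal (2 * K * q ^ (1 / m)) := by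
    rw [mul_assoc, ENNReal.ofReal_mul zero_le_two, ENNReal.ofReal_ofNat]
    exact eLpNorm_sub_lim_le hSmeas hSlim (ENNReal.one_le_ofReal.2 (by linarith))
      (fun n => hSK n q hq) n
  refine ⟨max 1 (2 * K * 2 ^ (1 / m)) * (Δ ^ Δ * Real.exp (-Δ)), by positivity,
    fun n hγ₀ hγ₁ => iSup_le fun ⟨p, hp⟩ => ENNReal.div_le_of_le_mul ?_⟩
  have hmem : MemLp (S n - Slim) 2 μ := by
    refine ⟨(hSmeas n).sub (aestronglyMeasurable_of_tendsto_ae _ hSmeas hSlim), ?_⟩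
    simpa using (hmoment n 2 le_rfl).trans_lt ENNReal.ofReal_lt_top
  rw [← ENNReal.ofReal_mul (by positivity)]
  exact eLpNorm_le_of_moment_growth hmem.1 hm hΔ (by positivity) hγ₀
    (hγ₁.trans (Real.exp_lt_one_iff.2 neg_one_lt_zero)) hmem.eLpNorm_two_eq_ofReal_integral_sq.le
    (hmoment n) hp

theorem stmt19 {Ω : Type*} [m0 : MeasurableSpace Ω] (μ : Measure Ω) [IsProbabilityMeasure μ]
    (ℱ : Filtration ℕ m0) (S : ℕ → Ω → ℝ) (hmart : Martingale S ℱ μ)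
    (m Δ : ℝ) (hm : 0 < m) (hΔ : 0 < Δ)
    (hK : (⨆ n : ℕ, ⨆ p : {p : ℝ // 2 ≤ p},
      eLpNorm (S n) (ENNReal.ofReal (p : ℝ)) μ / ENNReal.ofReal ((p : ℝ) ^ (1/m))) < ⊤)
    (Slim : Ω → ℝ)
    (hSlim : ∀ᵐ ω ∂μ, Filter.Tendsto (fun n => S n ω) Filter.atTop (𝓝 (Slim ω))) :
    ∃ C : ℝ, 0 < C ∧ ∀ n : ℕ,
      0 < (∫ ω, (S n ω - Slim ω) ^ 2 ∂μ) ^ ((1:ℝ)/2) →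
      (∫ ω, (S n ω - Slim ω) ^ 2 ∂μ) ^ ((1:ℝ)/2) < Real.exp (-1) →
      (⨆ p : {p : ℝ // 2 ≤ p},
          eLpNorm (fun ω => S n ω - Slim ω) (ENNReal.ofReal (p : ℝ)) μ /
            ENNReal.ofReal ((p : ℝ) ^ (Δ + 1/m))) ≤
        ENNReal.ofReal
          (C * |Real.log ((∫ ω, (S n ω - Slim ω) ^ 2 ∂μ) ^ ((1:ℝ)/2))| ^ (-Δ)) :=
  stmt19_general (m0 := m0) μ ℱ S hmart m Δ hm hΔ hK Slim hSlim
end
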